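/- arXiv:1212.2178 — 5 statements merged into one kernel-verified Lean document; each statement's English description precedes it below -/
import Mathlib

section
/- Let G be a finite undirected graph and let D be an orientation of G containing no reversible path. Then D minimizes the maximum indegree: for every orientation D' of G, the maximum indegree over all vertices in D is at most the maximum indegree over all vertices in D'. -/
/-- An orientation of an undirected simple graph `G`: each edge is assigned
exactly one direction, giving the arc relation `arc`. -/
structure GraphOrientation {V : Type*} (G : SimpleGraph V) where
  arc : V → V → Prop
  adj_iff : ∀ u v, G.Adj u v ↔ (arc u v ∨ arc v u)
  asymm : ∀ u v, arc u v → ¬ arc v u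

/-- The indegree of a vertex in an orientation. -/
noncomputable def indeg {V : Type*} {G : SimpleGraph V} (D : GraphOrientation G) (v : V) : ℕ :=
  {u | D.arc u v}.ncard

/-- The list of consecutive arcs of a path given as a list of vertices. -/
def pathArcs {V : Type*} (p : List V) : List (V × V) := p.zip p.tail

/-- The list of arcs of a cycle given as a list of (distinct) vertices,
including the closing arc from the last vertex back to the first. -/
def cycleArcs {V : Type*} (p : List V) : List (V × V) := p.zip (p.rotate 1)

/-- `p` is a (simple) directed path from `u` to `v` with respect to the arc relation `A`. -/
def IsDipath {V : Type*} (A : V → V → Prop) (p : List V) (u v : V) : Prop :=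
  p.head? = some u ∧ p.getLast? = some v ∧ p.Nodup ∧ p.Chain' A

/-- `D'` is obtained from `D` by reversing exactly the arcs in the list `A`
(all of which must be arcs of `D`). -/
def ReversalAlong {V : Type*} {G : SimpleGraph V} (D D' : GraphOrientation G)
    (A : List (V × V)) : Prop :=
  (∀ a ∈ A, D.arc a.1 a.2) ∧ ∀ u v, D'.arc u v ↔ ((D.arc u v ∧ (u, v) ∉ A) ∨ (v, u) ∈ A)

/-- `D'` is obtained from `D` by reversing every arc of some directed cycle. -/
def CycleReversal {V : Type*} {G : SimpleGraph V} (D D' : GraphOrientation G) : Prop :=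
  ∃ p : List V, p ≠ [] ∧ p.Nodup ∧ ReversalAlong D D' (cycleArcs p)

/-- `D'` is obtained from `D` by a weak reversal: reversing a directed path
from `u` to `v` where `δ(u) = δ(v) - 1`. -/
def WeakReversal {V : Type*} {G : SimpleGraph V} (D D' : GraphOrientation G) : Prop :=
  ∃ (p : List V) (u v : V), IsDipath D.arc p u v ∧ indeg D u + 1 = indeg D v ∧
    ReversalAlong D D' (pathArcs p)

/-- `D` contains no reversible path, i.e. no directed path from `u` to `v`
with `δ(u) < δ(v) - 1`. -/
def NoReversiblePath {V : Type*} {G : SimpleGraph V} (D : GraphOrientation G) : Prop :=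
  ∀ u v : V, Relation.ReflTransGen D.arc u v → indeg D v ≤ indeg D u + 1

/-- The indegree sequence of an orientation, sorted in decreasing order. -/
noncomputable def degSeq {V : Type*} [Fintype V] {G : SimpleGraph V}
    (D : GraphOrientation G) : List ℕ :=
  ((Finset.univ.val.map (indeg D)).sort (· ≤ ·)).reverse

/-- Lexicographic (non-strict) comparison of lists of naturals. -/
def lexLE (l₁ l₂ : List ℕ) : Prop := l₁ = l₂ ∨ List.Lex (· < ·) l₁ l₂

/-- `u` two-reaches `v`: there are two arc-disjoint directed paths from `u` to `v`. -/
def TwoReaches {V : Type*} (A : V → V → Prop) (u v : V) : Prop :=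
  ∃ p q : List V, IsDipath A p u v ∧ IsDipath A q u v ∧ ∀ a ∈ pathArcs p, a ∉ pathArcs q

/-- Reachability inside the induced subgraph `G[U]`. -/
def ReachIn {V : Type*} (G : SimpleGraph V) (U : Set V) (x y : V) : Prop :=
  Relation.ReflTransGen (fun a b => a ∈ U ∧ b ∈ U ∧ G.Adj a b) x y

/-- `C` is a connected component of the induced undirected subgraph `G[U]`. -/
def IsCompOf {V : Type*} (G : SimpleGraph V) (U C : Set V) : Prop :=
  ∃ x ∈ U, C = {y | ReachIn G U x y}

/-!
Fix a vertex `v` and let `S` be the set of vertices from which `v` is reachable in `D`.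
Every arc of `D` entering `S` starts in `S`, so `∑_{u ∈ S} δ_D(u)` is the number of edges of
`G[S]`, which no orientation can beat: `∑_{u ∈ S} δ_D(u) ≤ ∑_{u ∈ S} δ_{D'}(u) ≤ |S| · Δ(D')`.
Without reversible paths every `u ∈ S` has `δ_D(u) ≥ δ_D(v) - 1`, with a strict gain at `v`,
so `|S| (δ_D(v) - 1) < |S| · Δ(D')`, i.e. `δ_D(v) ≤ Δ(D')`.
-/

namespace GraphOrientation

open Finset

variable {V : Type*} {G : SimpleGraph V}

section

open Classical

/-- Every edge of `G[S]` is an arc of `E` in exactly one of its two directions. -/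
theorem two_mul_sum_card_filter_arc (E : GraphOrientation G) (S : Finset V) :
    2 * ∑ u ∈ S, #{w ∈ S | E.arc w u} = ∑ u ∈ S, #{w ∈ S | G.Adj w u} := by
  have hedge : ∀ u w, (if E.arc w u then 1 else 0) + (if E.arc u w then 1 else 0) =
      if G.Adj w u then 1 else 0 := by
    intro u w
    have := E.adj_iff w u
    have := E.asymm w u
    split_ifs <;> tauto
  simp only [card_filter, two_mul]
  nth_rw 2 [sum_comm]
  simp only [← sum_add_distrib, hedge]

theorem sum_card_filter_arc_eq (D D' : GraphOrientation G) (S : Finset V) :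
    ∑ u ∈ S, #{w ∈ S | D.arc w u} = ∑ u ∈ S, #{w ∈ S | D'.arc w u} := by
  have := (two_mul_sum_card_filter_arc D S).trans (two_mul_sum_card_filter_arc D' S).symm
  omega

variable [Fintype V]

theorem indeg_eq_card_filter (E : GraphOrientation G) (u : V) :
    indeg E u = #{w | E.arc w u} := by
  rw [indeg, ← Set.ncard_coe_finset]
  congr 1
  ext w
  simp

theorem card_filter_arc_le_indeg (E : GraphOrientation G) (S : Finset V) (u : V) :
    #{w ∈ S | E.arc w u} ≤ indeg E u := by
  rw [indeg_eq_card_filter]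
  exact card_le_card (filter_subset_filter _ (subset_univ S))

theorem card_filter_arc_eq_indeg {E : GraphOrientation G} {S : Finset V}
    (hS : ∀ u ∈ S, ∀ w, E.arc w u → w ∈ S) {u : V} (hu : u ∈ S) :
    #{w ∈ S | E.arc w u} = indeg E u := by
  rw [indeg_eq_card_filter]
  congr 1
  ext w
  simpa using hS u hu w

theorem sum_indeg_le_of_forall_arc_mem {D : GraphOrientation G} {S : Finset V}
    (hS : ∀ u ∈ S, ∀ w, D.arc w u → w ∈ S) (D' : GraphOrientation G) :
    ∑ u ∈ S, indeg D u ≤ ∑ u ∈ S, indeg D' u :=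
  calc ∑ u ∈ S, indeg D u = ∑ u ∈ S, #{w ∈ S | D.arc w u} :=
        (sum_congr rfl fun _ hu => card_filter_arc_eq_indeg hS hu).symm
    _ = ∑ u ∈ S, #{w ∈ S | D'.arc w u} := sum_card_filter_arc_eq D D' S
    _ ≤ ∑ u ∈ S, indeg D' u := sum_le_sum fun u _ => card_filter_arc_le_indeg D' S u

theorem indeg_le_sup_indeg_of_forall_arc_mem {D : GraphOrientation G} {S : Finset V}
    (hS : ∀ u ∈ S, ∀ w, D.arc w u → w ∈ S) {v : V} (hv : v ∈ S)
    (hlow : ∀ u ∈ S, indeg D v ≤ indeg D u + 1) (D' : GraphOrientation G) :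
    indeg D v ≤ univ.sup (indeg D') := by
  by_contra! hlt
  have hpos : 0 < indeg D v := by omega
  have hsum : ∑ _u ∈ S, (indeg D v - 1) < ∑ _u ∈ S, univ.sup (indeg D') :=
    calc ∑ _u ∈ S, (indeg D v - 1) < ∑ u ∈ S, indeg D u :=
          sum_lt_sum (fun u hu => by have := hlow u hu; omega) ⟨v, hv, by omega⟩
      _ ≤ ∑ u ∈ S, indeg D' u := sum_indeg_le_of_forall_arc_mem hS D'
      _ ≤ ∑ _u ∈ S, univ.sup (indeg D') := sum_le_sum fun u _ => le_sup (mem_univ u)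
  have hsup : indeg D v - 1 < univ.sup (indeg D') :=
    Nat.lt_of_mul_lt_mul_left (by simpa only [sum_const, smul_eq_mul] using hsum)
  omega

end

end GraphOrientation

/-- An orientation with no reversible path minimizes the maximum indegree among
all orientations. -/
theorem stmt_3 {V : Type*} [Fintype V] (G : SimpleGraph V)
    (D : GraphOrientation G) (hD : NoReversiblePath D) :
    ∀ D' : GraphOrientation G,
      Finset.univ.sup (indeg D) ≤ Finset.univ.sup (indeg D') := by
  classical
  intro D'
  refine Finset.sup_le fun v _ => ?_
  let ancestors : Finset V := {u | Relation.ReflTransGen D.arc u v}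
  have mem_ancestors : ∀ u, u ∈ ancestors ↔ Relation.ReflTransGen D.arc u v := by
    simp [ancestors]
  refine GraphOrientation.indeg_le_sup_indeg_of_forall_arc_mem (S := ancestors) ?_
    ((mem_ancestors v).2 .refl) (fun u hu => hD u v ((mem_ancestors u).1 hu)) D'
  intro u hu w hwu
  exact (mem_ancestors w).2 (.head hwu ((mem_ancestors u).1 hu))
end

section
/- Let G be a finite undirected graph, let f : ℕ → ℝ be increasing and strictly convex (i.e., f(i+1) − f(i) is strictly increasing in i), and let D be an orientation of G containing no reversible path. Then D minimizes the objective F(D) = Σ_{v ∈ V} f(δ_D(v)): for every orientation D' of G, Σ_v f(δ_D(v)) ≤ Σ_v f(δ_{D'}(v)). -/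
open Finset

lemma apply_eq_add_sum_range_mul_tsub (f : ℕ → ℝ) (n : ℕ) :
    f n = f 0 + n * (f 1 - f 0) +
      ∑ t ∈ range n, (f (t + 2) - 2 * f (t + 1) + f t) * ((n - (t + 1) : ℕ) : ℝ) := by
  induction n with
  | zero => simp
  | succ n ih =>
    have hshift : ∀ t ∈ range n, ((n + 1 - (t + 1) : ℕ) : ℝ) = ((n - (t + 1) : ℕ) : ℝ) + 1 := by
      intro t ht
      rw [← Nat.cast_add_one]
      congr 1
      have := mem_range.1 ht
      omega
    have htelescope : ∑ t ∈ range n, (f (t + 2) - 2 * f (t + 1) + f t) =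
        (f (n + 1) - f n) - (f 1 - f 0) := by
      rw [← sum_range_sub (fun t => f (t + 1) - f t)]
      exact sum_congr rfl fun t _ => by ring
    rw [sum_range_succ, Nat.sub_self, sum_congr rfl fun t ht => by rw [hshift t ht]]
    simp only [mul_add, mul_one, sum_add_distrib, htelescope, Nat.cast_zero, mul_zero, add_zero]
    push_cast
    linarith

lemma apply_eq_add_sum_mul_tsub (f : ℕ → ℝ) {n N : ℕ} (hn : n ≤ N) :
    f n = f 0 + n * (f 1 - f 0) +
      ∑ t ∈ range N, (f (t + 2) - 2 * f (t + 1) + f t) * ((n - (t + 1) : ℕ) : ℝ) := by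
  rw [← sum_subset (range_subset_range.2 hn), ← apply_eq_add_sum_range_mul_tsub]
  intro t _ ht
  rw [Nat.sub_eq_zero_of_le (by simp at ht; omega), Nat.cast_zero, mul_zero]

lemma sum_apply_eq_add_sum_mul_sum_tsub {ι : Type*} [Fintype ι] (f : ℕ → ℝ) (g : ι → ℕ) {N : ℕ}
    (hg : ∀ i, g i ≤ N) :
    ∑ i, f (g i) = Fintype.card ι * f 0 + (∑ i, g i : ℕ) * (f 1 - f 0) +
      ∑ t ∈ range N, (f (t + 2) - 2 * f (t + 1) + f t) * ((∑ i, (g i - (t + 1)) : ℕ) : ℝ) := by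
  simp only [fun i => apply_eq_add_sum_mul_tsub f (hg i), sum_add_distrib, Nat.cast_sum,
    sum_const, card_univ, nsmul_eq_mul, sum_mul, mul_sum]
  rw [sum_comm]

theorem sum_apply_le_of_sum_tsub_le {ι : Type*} [Fintype ι] (f : ℕ → ℝ)
    (hf : Monotone fun i => f (i + 1) - f i) (g g' : ι → ℕ) (hsum : ∑ i, g i = ∑ i, g' i)
    (hg : ∀ t, ∑ i, (g i - t) ≤ ∑ i, (g' i - t)) :
    ∑ i, f (g i) ≤ ∑ i, f (g' i) := by
  have hle : ∀ i, g i ≤ ∑ j, g j := fun i => single_le_sum (fun j _ => Nat.zero_le _) (mem_univ i)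
  have hle' : ∀ i, g' i ≤ ∑ j, g j := fun i =>
    hsum ▸ single_le_sum (fun j _ => Nat.zero_le _) (mem_univ i)
  rw [sum_apply_eq_add_sum_mul_sum_tsub f g hle, sum_apply_eq_add_sum_mul_sum_tsub f g' hle',
    hsum]
  refine add_le_add_right (sum_le_sum fun t _ => ?_) _
  refine mul_le_mul_of_nonneg_left (by exact_mod_cast hg (t + 1)) ?_
  have := hf (Nat.le_succ t)
  simp only at this
  linarith

namespace GraphOrientation

variable {V : Type*} {G : SimpleGraph V}

lemma arc_or_arc_of_arc (D D' : GraphOrientation G) {u v : V} (h : D.arc u v) :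
    D'.arc u v ∨ D'.arc v u :=
  (D'.adj_iff u v).1 ((D.adj_iff u v).2 (Or.inl h))

open scoped Classical in
noncomputable def arcsWithin (D : GraphOrientation G) (S T : Finset V) : Finset (V × V) :=
  (S ×ˢ T).filter fun p => D.arc p.1 p.2

lemma card_arcsWithin_le (D D' : GraphOrientation G) (S : Finset V) :
    #(D.arcsWithin S S) ≤ #(D'.arcsWithin S S) := by
  classical
  let orient : V × V → V × V := fun p => if D'.arc p.1 p.2 then p else p.swap
  refine card_le_card_of_injOn orient (fun p hp => ?_) (fun p hp q hq hpq => ?_)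
  · simp only [arcsWithin, coe_filter, mem_product] at hp ⊢
    obtain ⟨⟨h1, h2⟩, harc⟩ := hp
    by_cases h : D'.arc p.1 p.2
    · simp [orient, h, h1, h2]
    · simp [orient, h, h1, h2, (arc_or_arc_of_arc D D' harc).resolve_left h]
  · simp only [arcsWithin, coe_filter] at hp hq
    have key : ∀ p q : V × V, D.arc p.1 p.2 → D.arc q.1 q.2 → p ≠ q.swap := by
      rintro p q hp hq rfl
      exact D.asymm _ _ hp hq
    simp only [orient] at hpq
    split_ifs at hpq with h h' h'
    · exact hpq
    · exact absurd hpq (key p q hp.2 hq.2)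
    · exact absurd hpq.symm (key q p hq.2 hp.2)
    · exact Prod.swap_injective hpq

lemma card_arcsWithin_eq (D D' : GraphOrientation G) (S : Finset V) :
    #(D.arcsWithin S S) = #(D'.arcsWithin S S) :=
  (card_arcsWithin_le D D' S).antisymm (card_arcsWithin_le D' D S)

variable [Fintype V]

lemma sum_indeg_eq_card_arcsWithin (D : GraphOrientation G) (S : Finset V) :
    ∑ v ∈ S, indeg D v = #(D.arcsWithin univ S) := by
  classical
  have hindeg : ∀ v, indeg D v = ∑ u, if D.arc u v then 1 else 0 := fun v => by
    rw [indeg, Set.ncard_eq_toFinset_card', Set.toFinset_ofPred, card_filter]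
  simp only [hindeg, arcsWithin, card_filter, sum_product_right]

lemma arcsWithin_univ_eq_of_closed (D : GraphOrientation G) {S : Finset V}
    (hS : ∀ u v, D.arc u v → v ∈ S → u ∈ S) : D.arcsWithin univ S = D.arcsWithin S S := by
  ext p
  simp only [arcsWithin, mem_filter, mem_product, mem_univ, true_and]
  exact ⟨fun ⟨hp2, harc⟩ => ⟨⟨hS _ _ harc hp2, hp2⟩, harc⟩, fun ⟨⟨_, hp2⟩, harc⟩ => ⟨hp2, harc⟩⟩

lemma sum_indeg_eq_sum_indeg (D D' : GraphOrientation G) :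
    ∑ v, indeg D v = ∑ v, indeg D' v := by
  rw [sum_indeg_eq_card_arcsWithin, sum_indeg_eq_card_arcsWithin, card_arcsWithin_eq]

theorem sum_indeg_tsub_le_of_noReversiblePath {D : GraphOrientation G} (hD : NoReversiblePath D)
    (D' : GraphOrientation G) (t : ℕ) :
    ∑ v, (indeg D v - t) ≤ ∑ v, (indeg D' v - t) := by
  classical
  set U : Finset V := univ.filter fun u => ∃ v, Relation.ReflTransGen D.arc u v ∧ t < indeg D v
  have hU : ∀ u, u ∈ U ↔ ∃ v, Relation.ReflTransGen D.arc u v ∧ t < indeg D v := by simp [U]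
  have hUt : ∀ u ∈ U, t ≤ indeg D u := fun u hu => by
    obtain ⟨v, huv, hv⟩ := (hU u).1 hu
    have := hD u v huv
    omega
  have hclosed : ∀ u v, D.arc u v → v ∈ U → u ∈ U := fun u v huv hv => by
    obtain ⟨w, hvw, hw⟩ := (hU v).1 hv
    exact (hU u).2 ⟨w, .head huv hvw, hw⟩
  have hout : ∀ v ∉ U, indeg D v - t = 0 := fun v hv => by
    have : ¬ t < indeg D v := fun h => hv ((hU v).2 ⟨v, .refl, h⟩)
    omega
  calc ∑ v, (indeg D v - t) = ∑ v ∈ U, (indeg D v - t) :=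
        (sum_subset (subset_univ U) fun v _ hv => hout v hv).symm
    _ = ∑ v ∈ U, indeg D v - #U * t := by rw [sum_tsub_distrib U hUt, sum_const, smul_eq_mul]
    _ = #(D'.arcsWithin U U) - #U * t := by
        rw [sum_indeg_eq_card_arcsWithin, arcsWithin_univ_eq_of_closed D hclosed,
          card_arcsWithin_eq]
    _ ≤ ∑ v ∈ U, indeg D' v - #U * t := by
        rw [sum_indeg_eq_card_arcsWithin]
        gcongr
        exact filter_subset_filter _ (product_subset_product_left (subset_univ U))
    _ ≤ ∑ v ∈ U, (indeg D' v - t) := by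
        rw [tsub_le_iff_right, ← smul_eq_mul, ← sum_const, ← sum_add_distrib]
        exact sum_le_sum fun v _ => le_tsub_add
    _ ≤ ∑ v, (indeg D' v - t) := sum_le_sum_of_subset (subset_univ U)

end GraphOrientation

theorem stmt_4_general {V : Type*} [Fintype V] (G : SimpleGraph V)
    (f : ℕ → ℝ)
    (hconvex : ∀ i j : ℕ, i < j → f (i + 1) - f i < f (j + 1) - f j)
    (D : GraphOrientation G) (hD : NoReversiblePath D) :
    ∀ D' : GraphOrientation G, ∑ v : V, f (indeg D v) ≤ ∑ v : V, f (indeg D' v) := by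
  intro D'
  have hf : Monotone fun i => f (i + 1) - f i :=
    (show StrictMono fun i => f (i + 1) - f i from hconvex).monotone
  exact sum_apply_le_of_sum_tsub_le f hf _ _ (D.sum_indeg_eq_sum_indeg D')
    (GraphOrientation.sum_indeg_tsub_le_of_noReversiblePath hD D')

/-- For an increasing, strictly convex `f : ℕ → ℝ`, an orientation with no reversible
path minimizes `∑ v, f (δ v)` among all orientations. -/
theorem stmt_4 {V : Type*} [Fintype V] (G : SimpleGraph V)
    (f : ℕ → ℝ) (hmono : StrictMono f)
    (hconvex : ∀ i j : ℕ, i < j → f (i + 1) - f i < f (j + 1) - f j)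
    (D : GraphOrientation G) (hD : NoReversiblePath D) :
    ∀ D' : GraphOrientation G, ∑ v : V, f (indeg D v) ≤ ∑ v : V, f (indeg D' v) :=
  stmt_4_general G f hconvex D hD
end

section
/- Let G be a finite undirected graph, let f : ℕ → ℝ be increasing and strictly convex (i.e., f(i+1) − f(i) is strictly increasing in i), let D be an orientation of G, and let P be a reversible directed path in D from u to v. Let D' be the orientation obtained from D by reversing P. Then Σ_w f(δ_{D'}(w)) < Σ_w f(δ_D(w)). -/
/-!
Reversing a directed path from `u` to `v` changes no indegree except at the ends: an interior
vertex of the path trades its incoming path arc for its outgoing one. So `δ(u)` goes up by one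
and `δ(v)` down by one, and since `δ(u) < δ(v) - 1`, strict convexity of `f` makes the gain
`f (δ(u) + 1) - f (δ(u))` smaller than the loss `f (δ(v)) - f (δ(v) - 1)`.
-/

theorem sum_lt_sum_of_unit_transfer {ι : Type*} [Fintype ι] [DecidableEq ι] {f : ℕ → ℝ}
    (hf : StrictMono fun i => f (i + 1) - f i) {d d' : ι → ℕ} {u v : ι}
    (hd : ∀ w, d' w + (if w = v then 1 else 0) = d w + (if w = u then 1 else 0))
    (huv : d u + 1 < d v) :
    ∑ w, f (d' w) < ∑ w, f (d w) := by
  have hne : u ≠ v := by rintro rfl; omega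
  have hu : d' u = d u + 1 := by simpa [hne] using hd u
  have hv : d' v + 1 = d v := by simpa [hne.symm] using hd v
  have hrest : ∀ w ∈ Finset.univ, w ∉ ({u, v} : Finset ι) → f (d' w) - f (d w) = 0 := by
    intro w _ hw
    simp only [Finset.mem_insert, Finset.mem_singleton, not_or] at hw
    rw [show d' w = d w by simpa [hw.1, hw.2] using hd w, sub_self]
  rw [← sub_neg, ← Finset.sum_sub_distrib,
    ← Finset.sum_subset (Finset.subset_univ {u, v}) hrest, Finset.sum_pair hne, hu, ← hv]
  linarith [hf (show d u < d' v by omega)]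

section Lists

variable {α β : Type*}

theorem ncard_setOf_mem_of_nodup_map_snd [DecidableEq β] {A : List (α × β)}
    (hA : (A.map Prod.snd).Nodup) (b : β) :
    {a | (a, b) ∈ A}.ncard = (A.map Prod.snd).count b := by
  by_cases hb : b ∈ A.map Prod.snd
  · obtain ⟨⟨a, b⟩, ha, rfl⟩ := List.mem_map.1 hb
    have : {x | (x, b) ∈ A} = {a} := by
      ext x
      refine ⟨fun hx => ?_, fun hx => hx ▸ ha⟩
      exact congrArg Prod.fst (List.inj_on_of_nodup_map hA hx ha rfl)
    rw [this, Set.ncard_singleton, List.count_eq_one_of_mem hA hb]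
  · have : {x | (x, b) ∈ A} = ∅ :=
      Set.eq_empty_of_forall_notMem fun x hx => hb (List.mem_map_of_mem (f := Prod.snd) hx)
    rw [this, Set.ncard_empty, List.count_eq_zero_of_not_mem hb]

theorem ncard_setOf_mem_of_nodup_map_fst [DecidableEq α] {A : List (α × β)}
    (hA : (A.map Prod.fst).Nodup) (a : α) :
    {b | (a, b) ∈ A}.ncard = (A.map Prod.fst).count a := by
  have hswap : (A.map Prod.swap).map Prod.snd = A.map Prod.fst := by
    rw [List.map_map]; rfl
  simpa only [List.mem_map_swap, hswap] using
    ncard_setOf_mem_of_nodup_map_snd (A := A.map Prod.swap) (hswap ▸ hA) a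

theorem map_fst_pathArcs : ∀ p : List α, (pathArcs p).map Prod.fst = p.dropLast
  | [] | [_] => rfl
  | a :: b :: l => congrArg (a :: ·) (map_fst_pathArcs (b :: l))

theorem map_snd_pathArcs (p : List α) : (pathArcs p).map Prod.snd = p.tail :=
  List.map_snd_zip (by simp)

end Lists

section Orientations

variable {V : Type*} {G : SimpleGraph V} {D D' : GraphOrientation G}

theorem ReversalAlong.indeg_add_ncard [Finite V] {A : List (V × V)} (h : ReversalAlong D D' A)
    (w : V) :
    indeg D' w + {x | (x, w) ∈ A}.ncard = indeg D w + {x | (w, x) ∈ A}.ncard := by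
  have hin : {x | D'.arc x w} = ({x | D.arc x w} \ {x | (x, w) ∈ A}) ∪ {x | (w, x) ∈ A} := by
    ext x
    simp [h.2]
  have hdisj : Disjoint ({x | D.arc x w} \ {x | (x, w) ∈ A}) {x | (w, x) ∈ A} :=
    Set.disjoint_left.2 fun x hx hxA => D.asymm _ _ (h.1 _ hxA) hx.1
  have hsub : {x | (x, w) ∈ A} ⊆ {x | D.arc x w} := fun x hx => h.1 _ hx
  rw [indeg, indeg, hin, Set.ncard_union_eq hdisj, add_right_comm,
    Set.ncard_sdiff_add_ncard_of_subset hsub]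

theorem indeg_add_ite_of_reversalAlong_pathArcs [Finite V] [DecidableEq V] {p : List V} {u v : V}
    (hp : IsDipath D.arc p u v) (h : ReversalAlong D D' (pathArcs p)) (w : V) :
    indeg D' w + (if w = v then 1 else 0) = indeg D w + (if w = u then 1 else 0) := by
  obtain ⟨hu, hv, hnd, -⟩ := hp
  have key := h.indeg_add_ncard w
  have htail : ((pathArcs p).map Prod.snd).Nodup := by
    rw [map_snd_pathArcs]; exact hnd.sublist p.tail_sublist
  have hdropLast : ((pathArcs p).map Prod.fst).Nodup := by
    rw [map_fst_pathArcs]; exact hnd.sublist p.dropLast_sublist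
  rw [ncard_setOf_mem_of_nodup_map_snd htail, ncard_setOf_mem_of_nodup_map_fst hdropLast,
    map_snd_pathArcs, map_fst_pathArcs] at key
  obtain ⟨t, rfl⟩ := List.head?_eq_some_iff.1 hu
  have hcount : ((u :: t).dropLast ++ [v]).count w = (u :: t).count w := by
    rw [List.dropLast_append_getLast? v hv]
  simp only [List.count_append, List.count_cons, List.count_nil, beq_iff_eq, List.tail_cons,
    eq_comm (a := u), eq_comm (a := v)] at hcount key
  omega

end Orientations

theorem stmt_5_general {V : Type*} [Fintype V] (G : SimpleGraph V)
    (f : ℕ → ℝ)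
    (hconvex : ∀ i j : ℕ, i < j → f (i + 1) - f i < f (j + 1) - f j)
    (D D' : GraphOrientation G) (p : List V) (u v : V)
    (hp : IsDipath D.arc p u v) (hrev : indeg D u + 1 < indeg D v)
    (hD' : ReversalAlong D D' (pathArcs p)) :
    ∑ w : V, f (indeg D' w) < ∑ w : V, f (indeg D w) := by
  classical
  exact sum_lt_sum_of_unit_transfer hconvex (indeg_add_ite_of_reversalAlong_pathArcs hp hD') hrev

/-- Reversing a reversible path strictly decreases `∑ v, f (δ v)` for any increasing,
strictly convex `f : ℕ → ℝ`. -/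
theorem stmt_5 {V : Type*} [Fintype V] (G : SimpleGraph V)
    (f : ℕ → ℝ) (hmono : StrictMono f)
    (hconvex : ∀ i j : ℕ, i < j → f (i + 1) - f i < f (j + 1) - f j)
    (D D' : GraphOrientation G) (p : List V) (u v : V)
    (hp : IsDipath D.arc p u v) (hrev : indeg D u + 1 < indeg D v)
    (hD' : ReversalAlong D D' (pathArcs p)) :
    ∑ w : V, f (indeg D' w) < ∑ w : V, f (indeg D w) :=
  stmt_5_general G f hconvex D D' p u v hp hrev hD'
end

section
/- Let D be a finite strongly connected digraph and let P be a directed path in D from a vertex u to a vertex v. Then the digraph obtained from D by reversing every arc of P is strongly connected if and only if u two-reaches v in D, that is, if and only if there exist two arc-disjoint directed paths from u to v in D. -/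
/-! If `A'` is strongly connected, take an `A'`-path `Q` from `u` to `v`. The arcs of `P` and of `Q`
are disjoint; cancelling the antiparallel pairs between them leaves a set of `A`-arcs with net
out-flow `2` at `u`, `-2` at `v` and `0` elsewhere, and peeling a `u`–`v` path off it twice gives
two arc-disjoint paths.

Conversely, the reversed arcs of `P` let every vertex of `P` reach all earlier ones in `A'`, so at
most one arc of `P` leaves any set closed under `A'`. If `u` did not reach `v` in `A'`, both
arc-disjoint paths would leave the `A'`-reach set of `u`, each through an arc of `P`. Once `u`
reaches `v`, every reversed arc `(x, y)` of `P` is bypassed by `x ⇝ u ⇝ v ⇝ y`. -/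

open Relation

section TwoReaches

variable {V : Type*} {R S : V → V → Prop} {l : List V} {a b w x : V}

theorem pathArcs_cons_cons (a b : V) (l : List V) :
    pathArcs (a :: b :: l) = (a, b) :: pathArcs (b :: l) := rfl

theorem mem_pathArcs_iff :
    (a, b) ∈ pathArcs l ↔ ∃ i, ∃ h : i + 1 < l.length, l[i] = a ∧ l[i + 1] = b := by
  simp only [pathArcs, List.mem_iff_getElem, List.getElem_zip, List.getElem_tail, Prod.ext_iff,
    List.length_zip, List.length_tail]
  constructor
  · rintro ⟨i, hi, h⟩
    exact ⟨i, by omega, h⟩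
  · rintro ⟨i, hi, h⟩
    exact ⟨i, by omega, h⟩

theorem List.IsChain.rel_of_mem_pathArcs (hl : l.IsChain R) (h : (a, b) ∈ pathArcs l) :
    R a b := by
  obtain ⟨i, hi, rfl, rfl⟩ := mem_pathArcs_iff.1 h
  exact List.isChain_iff_getElem.1 hl i hi

theorem List.Nodup.swap_notMem_pathArcs (hl : l.Nodup) (h : (a, b) ∈ pathArcs l) :
    (b, a) ∉ pathArcs l := by
  intro h'
  obtain ⟨i, hi, rfl, rfl⟩ := mem_pathArcs_iff.1 h
  obtain ⟨k, hk, hk1, hk2⟩ := mem_pathArcs_iff.1 h'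
  rw [hl.getElem_inj_iff] at hk1 hk2
  omega

theorem List.IsChain.reflTransGen_getElem (hl : l.IsChain R) {i k : ℕ} (hik : i ≤ k)
    (hk : k < l.length) : ReflTransGen R (l[i]'(by omega)) l[k] := by
  induction k, hik using Nat.le_induction with
  | base => rfl
  | succ k hik ih => exact (ih (by omega)).tail (List.isChain_iff_getElem.1 hl k hk)

theorem List.IsChain.exists_crossing_mem_pathArcs {X : V → Prop} (hl : l.IsChain R)
    (ha : l.head? = some a) (hb : l.getLast? = some b) (hXa : X a) (hXb : ¬ X b) :
    ∃ x y, (x, y) ∈ pathArcs l ∧ X x ∧ ¬ X y := by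
  induction l generalizing a with
  | nil => simp at ha
  | cons c t ih =>
    obtain rfl : c = a := by simpa using ha
    cases t with
    | nil =>
      obtain rfl : c = b := by simpa using hb
      exact absurd hXa hXb
    | cons d s =>
      by_cases hXd : X d
      · obtain ⟨x, y, hxy, hx, hy⟩ := ih hl.tail rfl (by simpa using hb) hXd
        exact ⟨x, y, List.mem_cons_of_mem _ hxy, hx, hy⟩
      · exact ⟨c, d, List.mem_cons_self, hXa, hXd⟩

theorem IsDipath.singleton (R : V → V → Prop) (a : V) : IsDipath R [a] a a :=
  ⟨rfl, rfl, List.nodup_singleton a, List.isChain_singleton a⟩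

theorem IsDipath.mono (h : IsDipath R l a b) (hRS : ∀ x y, R x y → S x y) : IsDipath S l a b :=
  ⟨h.1, h.2.1, h.2.2.1, h.2.2.2.imp hRS⟩

theorem IsDipath.exists_cons (h : IsDipath R l x b) (hwx : R w x) : ∃ l', IsDipath R l' w b := by
  obtain ⟨hh, hl, hnd, hc⟩ := h
  by_cases hw : w ∈ l
  · obtain ⟨s, t, rfl⟩ := List.append_of_mem hw
    refine ⟨w :: t, rfl, by simpa [List.getLast?_append] using hl,
      hnd.sublist (List.sublist_append_right s _), (List.isChain_append.1 hc).2.1⟩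
  · obtain ⟨t, rfl⟩ : ∃ t, l = x :: t := by
      cases l with
      | nil => simp at hh
      | cons c t => exact ⟨t, by simpa using hh⟩
    exact ⟨w :: x :: t, rfl, by simpa using hl, List.nodup_cons.2 ⟨hw, hnd⟩,
      hc.cons_cons hwx⟩

theorem IsDipath.exists_of_reflTransGen (h : ReflTransGen R a b) : ∃ l, IsDipath R l a b := by
  induction h using ReflTransGen.head_induction_on with
  | refl => exact ⟨[b], IsDipath.singleton R b⟩
  | head hac _ ih => exact ih.elim fun _ hl => hl.exists_cons hac

section NetOut

variable [DecidableEq V] {E F : Finset (V × V)} {u v : V}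

def netOut (E : Finset (V × V)) (z : V) : ℤ :=
  ∑ e ∈ E, ((if e.1 = z then 1 else 0) - if e.2 = z then 1 else 0)

theorem netOut_image_swap (E : Finset (V × V)) (z : V) :
    netOut (E.image Prod.swap) z = -netOut E z := by
  rw [netOut, netOut, Finset.sum_image (fun _ _ _ _ h => Prod.swap_injective h),
    ← Finset.sum_neg_distrib]
  simp only [Prod.fst_swap, Prod.snd_swap, neg_sub]

theorem netOut_sdiff (h : F ⊆ E) (z : V) : netOut (E \ F) z = netOut E z - netOut F z :=
  Finset.sum_sdiff_eq_sub h

theorem netOut_union_sdiff_image_swap (h : Disjoint E F) (z : V) :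
    netOut ((E \ F.image Prod.swap) ∪ (F \ E.image Prod.swap)) z = netOut E z + netOut F z := by
  have hEF : E ∩ F.image Prod.swap = (F ∩ E.image Prod.swap).image Prod.swap := by
    ext ⟨a, b⟩
    simp only [Finset.mem_inter, Finset.mem_image, Prod.exists, Prod.swap_prod_mk, Prod.mk.injEq]
    grind
  rw [netOut, Finset.sum_union (h.mono Finset.sdiff_subset Finset.sdiff_subset), ← netOut,
    ← netOut, ← Finset.sdiff_inter_self_left E, ← Finset.sdiff_inter_self_left F,
    netOut_sdiff Finset.inter_subset_left, netOut_sdiff Finset.inter_subset_left, hEF,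
    netOut_image_swap]
  ring

theorem IsDipath.netOut_pathArcs {R : V → V → Prop} (h : IsDipath R l u v) (z : V) :
    netOut (pathArcs l).toFinset z = (if u = z then 1 else 0) - if v = z then 1 else 0 := by
  obtain ⟨hu, hv, hnd, hc⟩ := h
  induction l generalizing u with
  | nil => simp at hu
  | cons x t ih =>
    obtain rfl : x = u := by simpa using hu
    cases t with
    | nil =>
      obtain rfl : x = v := by simpa using hv
      simp [netOut, pathArcs]
    | cons y s =>
      have hx : (x, y) ∉ pathArcs (y :: s) := fun hxy =>
        (List.nodup_cons.1 hnd).1 (List.of_mem_zip hxy).1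
      rw [pathArcs_cons_cons, List.toFinset_cons, netOut, Finset.sum_insert (by simpa using hx),
        ← netOut, ih rfl (by simpa using hv) hnd.of_cons hc.tail]
      split_ifs <;> subst_vars <;> omega

theorem reflTransGen_of_netOut (hE : ∀ z ≠ v, 0 ≤ netOut E z) (hw : 0 < netOut E w) :
    ReflTransGen (fun a b => (a, b) ∈ E) w v := by
  induction E using Finset.strongInduction generalizing w with
  | H E ih =>
  obtain ⟨x, he⟩ : ∃ x, (w, x) ∈ E := by
    by_contra! hne
    have : netOut E w ≤ 0 := Finset.sum_nonpos fun ⟨a, b⟩ he => by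
      rw [if_neg fun h : a = w => hne b (h ▸ he)]
      split_ifs <;> simp
    omega
  by_cases hx : x = v
  · exact .single (hx ▸ he)
  have herase (z : V) : netOut (E.erase (w, x)) z =
      netOut E z - (if w = z then 1 else 0) + if x = z then 1 else 0 := by
    rw [netOut, Finset.sum_erase_eq_sub he, ← netOut]
    ring
  have hxv : ReflTransGen (fun a b => (a, b) ∈ E.erase (w, x)) x v := by
    refine ih _ (Finset.erase_ssubset he) (fun z hz => ?_) ?_ <;> rw [herase]
    · have := hE z hz
      split_ifs <;> subst_vars <;> omega
    · have := hE x hx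
      rw [if_pos rfl]
      split_ifs <;> subst_vars <;> omega
  exact .head he (ReflTransGen.mono (fun _ _ => Finset.mem_of_mem_erase) _ _ hxv)

theorem twoReaches_of_netOut {A : V → V → Prop} (hEA : ∀ e ∈ E, A e.1 e.2) (huv : u ≠ v)
    (hnet : ∀ z, netOut E z = 2 * ((if u = z then 1 else 0) - if v = z then 1 else 0)) :
    TwoReaches A u v := by
  have hvu : ¬ v = u := Ne.symm huv
  obtain ⟨r, hr⟩ := IsDipath.exists_of_reflTransGen <|
    reflTransGen_of_netOut (E := E) (v := v) (w := u)
    (fun z hz => by rw [hnet]; split_ifs <;> simp_all) (by rw [hnet]; simp [hvu])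
  have hrE : (pathArcs r).toFinset ⊆ E := fun ⟨a, b⟩ hab =>
    hr.2.2.2.rel_of_mem_pathArcs (List.mem_toFinset.1 hab)
  set F := E \ (pathArcs r).toFinset
  have hnetF (z : V) : netOut F z = (if u = z then 1 else 0) - if v = z then 1 else 0 := by
    rw [netOut_sdiff hrE, hnet, hr.netOut_pathArcs]
    ring
  obtain ⟨s, hs⟩ := IsDipath.exists_of_reflTransGen <|
    reflTransGen_of_netOut (E := F) (v := v) (w := u)
    (fun z hz => by rw [hnetF]; split_ifs <;> simp_all) (by rw [hnetF]; simp [hvu])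
  refine ⟨r, s, hr.mono fun a b hab => hEA (a, b) hab, hs.mono fun a b hab => ?_, ?_⟩
  · exact hEA (a, b) (Finset.mem_sdiff.1 hab).1
  · rintro ⟨a, b⟩ hr' hs'
    exact (Finset.mem_sdiff.1 (hs.2.2.2.rel_of_mem_pathArcs hs')).2 (List.mem_toFinset.2 hr')

end NetOut

def IsReversalAlong (A A' : V → V → Prop) (P : List (V × V)) : Prop :=
  ∀ x y, A' x y ↔ ((A x y ∧ (x, y) ∉ P) ∨ (y, x) ∈ P)

namespace IsReversalAlong

variable {A A' : V → V → Prop} {p : List V} {u v : V}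

theorem rel_swap (h : IsReversalAlong A A' (pathArcs p)) (hab : (a, b) ∈ pathArcs p) : A' b a :=
  (h b a).2 (.inr hab)

theorem rel_of_notMem (h : IsReversalAlong A A' (pathArcs p)) (hab : A a b)
    (hn : (a, b) ∉ pathArcs p) : A' a b :=
  (h a b).2 (.inl ⟨hab, hn⟩)

theorem reflTransGen_getElem (h : IsReversalAlong A A' (pathArcs p)) {i k : ℕ} (hik : i ≤ k)
    (hk : k < p.length) : ReflTransGen A' p[k] (p[i]'(by omega)) := by
  have hc : p.IsChain (flip A') :=
    List.isChain_iff_getElem.2 fun j hj => h.rel_swap (mem_pathArcs_iff.2 ⟨j, hj, rfl, rfl⟩)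
  exact reflTransGen_swap.1 (hc.reflTransGen_getElem hik hk)

theorem eq_of_mem_pathArcs_of_exit (h : IsReversalAlong A A' (pathArcs p)) {c d : V}
    (hab : (a, b) ∈ pathArcs p) (hcd : (c, d) ∈ pathArcs p) (ha : ReflTransGen A' w a)
    (hb : ¬ ReflTransGen A' w b) (hc : ReflTransGen A' w c) (hd : ¬ ReflTransGen A' w d) :
    (a, b) = (c, d) := by
  obtain ⟨i, hi, rfl, rfl⟩ := mem_pathArcs_iff.1 hab
  obtain ⟨k, hk, rfl, rfl⟩ := mem_pathArcs_iff.1 hcd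
  rcases lt_trichotomy i k with hik | rfl | hik
  · exact absurd (hc.trans (h.reflTransGen_getElem hik (by omega))) hb
  · rfl
  · exact absurd (ha.trans (h.reflTransGen_getElem hik (by omega))) hd

theorem reflTransGen_of_twoReaches (h : IsReversalAlong A A' (pathArcs p))
    (htwo : TwoReaches A u v) : ReflTransGen A' u v := by
  by_contra huv
  have hleave {q : List V} (hq : IsDipath A q u v) : ∃ e ∈ pathArcs q, e ∈ pathArcs p ∧
      ReflTransGen A' u e.1 ∧ ¬ ReflTransGen A' u e.2 := by
    obtain ⟨x, y, hxy, hx, hy⟩ :=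
      hq.2.2.2.exists_crossing_mem_pathArcs (X := ReflTransGen A' u) hq.1 hq.2.1 .refl huv
    refine ⟨(x, y), hxy, by_contra fun hn => hy (hx.tail ?_), hx, hy⟩
    exact h.rel_of_notMem (hq.2.2.2.rel_of_mem_pathArcs hxy) hn
  obtain ⟨q₁, q₂, hq₁, hq₂, hdisj⟩ := htwo
  obtain ⟨⟨a, b⟩, hab₁, hab, ha, hb⟩ := hleave hq₁
  obtain ⟨⟨c, d⟩, hcd₂, hcd, hc, hd⟩ := hleave hq₂
  exact hdisj _ hab₁ (h.eq_of_mem_pathArcs_of_exit hab hcd ha hb hc hd ▸ hcd₂)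

theorem reflTransGen_of_rel (h : IsReversalAlong A A' (pathArcs p)) (hp : IsDipath A p u v)
    (huv : ReflTransGen A' u v) (hab : A a b) : ReflTransGen A' a b := by
  by_cases hn : (a, b) ∈ pathArcs p
  · obtain ⟨i, hi, rfl, rfl⟩ := mem_pathArcs_iff.1 hn
    have hu : p[0] = u := by
      simpa [List.head?_eq_getElem?, show 0 < p.length by omega] using hp.1
    have hv : p[p.length - 1] = v := by
      simpa [List.getLast?_eq_getElem?, show p.length - 1 < p.length by omega] using hp.2.1
    exact (hu ▸ h.reflTransGen_getElem (Nat.zero_le i) _).trans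
      (huv.trans (hv ▸ h.reflTransGen_getElem (by omega) _))
  · exact .single (h.rel_of_notMem hab hn)

theorem twoReaches_of_reflTransGen (h : IsReversalAlong A A' (pathArcs p))
    (hp : IsDipath A p u v) (huv : ReflTransGen A' u v) : TwoReaches A u v := by
  classical
  by_cases heq : u = v
  · subst heq
    exact ⟨[u], [u], .singleton A u, .singleton A u, by simp [pathArcs]⟩
  obtain ⟨q, hq⟩ := IsDipath.exists_of_reflTransGen huv
  set P := (pathArcs p).toFinset
  set Q := (pathArcs q).toFinset
  have hdisj : Disjoint P Q := by
    refine Finset.disjoint_left.2 fun ⟨a, b⟩ hp' hq' => ?_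
    rw [List.mem_toFinset] at hp' hq'
    rcases (h a b).1 (hq.2.2.2.rel_of_mem_pathArcs hq') with ⟨_, hn⟩ | hba
    · exact hn hp'
    · exact hp.2.2.1.swap_notMem_pathArcs hp' hba
  refine twoReaches_of_netOut (E := (P \ Q.image Prod.swap) ∪ (Q \ P.image Prod.swap))
    (fun ⟨a, b⟩ hab => ?_) heq fun z => ?_
  · rcases Finset.mem_union.1 hab with hab | hab
    · exact hp.2.2.2.rel_of_mem_pathArcs (List.mem_toFinset.1 (Finset.mem_sdiff.1 hab).1)
    · obtain ⟨hq', hn⟩ := Finset.mem_sdiff.1 hab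
      rcases (h a b).1 (hq.2.2.2.rel_of_mem_pathArcs (List.mem_toFinset.1 hq'))
        with ⟨hA, _⟩ | hba
      · exact hA
      · exact absurd (Finset.mem_image.2 ⟨(b, a), List.mem_toFinset.2 hba, rfl⟩) hn
  · rw [netOut_union_sdiff_image_swap hdisj, hp.netOut_pathArcs, hq.netOut_pathArcs]
    ring

end IsReversalAlong

end TwoReaches

theorem stmt_8_general {V : Type*} (A A' : V → V → Prop)
    (hsc : ∀ u v : V, Relation.ReflTransGen A u v)
    (p : List V) (u v : V) (hp : IsDipath A p u v)
    (hA' : ∀ x y : V, A' x y ↔ ((A x y ∧ (x, y) ∉ pathArcs p) ∨ (y, x) ∈ pathArcs p)) :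
    (∀ x y : V, Relation.ReflTransGen A' x y) ↔ TwoReaches A u v := by
  refine ⟨fun hsc' => IsReversalAlong.twoReaches_of_reflTransGen hA' hp (hsc' u v),
    fun htwo => ?_⟩
  have huv := IsReversalAlong.reflTransGen_of_twoReaches hA' htwo
  exact fun x y =>
    reflTransGen_closed (fun _ _ => IsReversalAlong.reflTransGen_of_rel hA' hp huv) x y (hsc x y)

/-- In a finite strongly connected digraph, reversing a directed path from `u` to `v`
yields a strongly connected digraph if and only if `u` two-reaches `v`. -/
theorem stmt_8 {V : Type*} [Fintype V] (A A' : V → V → Prop)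
    (hsc : ∀ u v : V, Relation.ReflTransGen A u v)
    (p : List V) (u v : V) (hp : IsDipath A p u v)
    (hA' : ∀ x y : V, A' x y ↔ ((A x y ∧ (x, y) ∉ pathArcs p) ∨ (y, x) ∈ pathArcs p)) :
    (∀ x y : V, Relation.ReflTransGen A' x y) ↔ TwoReaches A u v :=
  stmt_8_general A A' hsc p u v hp hA'
end

section
/- Let D be a finite digraph and let u, s, t, v be vertices. Suppose s two-reaches v and t two-reaches v, and suppose there exist a directed path from u to s and a directed path from u to t that are arc-disjoint. Then u two-reaches v. -/
/-!
By the two-arc case of Menger's theorem it suffices that every set `S` containing `u` but not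
`v` is left by at least two arcs. If `s ∈ S`, the two arc-disjoint paths from `s` to `v` each
leave `S`; likewise if `t ∈ S`; otherwise the two arc-disjoint paths from `u` to `s` and to `t`
each leave `S`.

Menger's theorem is proved by one augmentation. Take a path `P` from `u` to `v`; a path `Q` from
`u` to `v` in the residual digraph (the arcs of `P` reversed) exists, because otherwise the set
reachable from `u` there is left only by arcs of `P` and `P` leaves it exactly once. The arcs of
`P` and of `Q` that are not cancelled by each other form a flow of value two from `u` to `v`, and
such a flow is split into two arc-disjoint paths by peeling off one path at a time.
-/

section TwoReach

open Finset

variable {V : Type*} {A B : V → V → Prop} {p : List V} {u v : V}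

theorem rel_of_mem_pathArcs (hp : p.IsChain A) {e : V × V} (he : e ∈ pathArcs p) :
    A e.1 e.2 := by
  induction p with
  | nil => simp [pathArcs] at he
  | cons x l ih =>
    cases l with
    | nil => simp [pathArcs] at he
    | cons y l =>
      obtain ⟨hxy, hl⟩ := List.isChain_cons_cons.1 hp
      rcases List.mem_cons.1 (show e ∈ (x, y) :: pathArcs (y :: l) from he) with rfl | he
      · exact hxy
      · exact ih hl he

theorem nodup_pathArcs (hp : p.Nodup) : (pathArcs p).Nodup := by
  have hsnd : (pathArcs p).map Prod.snd = p.tail := List.map_snd_zip (by simp)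
  exact List.Nodup.of_map Prod.snd (hsnd ▸ hp.tail)

theorem sum_map_pathArcs_sub {G : Type*} [AddCommGroup G] (f : V → G) :
    ∀ {p : List V} {u v : V}, p.head? = some u → p.getLast? = some v →
      ((pathArcs p).map fun e => f e.1 - f e.2).sum = f u - f v
  | [], _, _, hu, _ => by simp at hu
  | [x], _, _, hu, hv => by simp_all [pathArcs]
  | x :: y :: l, _, _, hu, hv => by
    simp only [List.head?_cons, Option.some.injEq] at hu
    subst hu
    rw [List.getLast?_cons_cons] at hv
    have ih := sum_map_pathArcs_sub f (p := y :: l) rfl hv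
    simp only [pathArcs, List.tail_cons, List.zip_cons_cons, List.map_cons,
      List.sum_cons] at ih ⊢
    rw [ih]
    abel

theorem IsDipath.mono_s9 (hAB : ∀ ⦃a b⦄, A a b → B a b) (hp : IsDipath A p u v) :
    IsDipath B p u v :=
  ⟨hp.1, hp.2.1, hp.2.2.1, hp.2.2.2.imp hAB⟩

theorem exists_isDipath_of_reflTransGen (h : Relation.ReflTransGen A u v) :
    ∃ p, IsDipath A p u v := by
  induction h with
  | refl => exact ⟨[u], rfl, rfl, List.nodup_singleton u, List.isChain_singleton u⟩
  | @tail b c _ hbc ih =>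
    obtain ⟨p, hh, hl, hnd, hch⟩ := ih
    by_cases hcp : c ∈ p
    · obtain ⟨l₁, l₂, rfl⟩ := List.append_of_mem hcp
      have hpre : l₁ ++ [c] <+: l₁ ++ c :: l₂ := ⟨l₂, by simp⟩
      refine ⟨l₁ ++ [c], ?_, by simp, hnd.sublist hpre.sublist, hch.infix hpre.isInfix⟩
      cases l₁ <;> simp_all
    · refine ⟨p ++ [c], ?_, by simp, ?_, ?_⟩
      · rw [List.head?_append, hh]; rfl
      · simpa [List.nodup_append] using ⟨hnd, fun x hx hxc => hcp (hxc ▸ hx)⟩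
      · refine List.isChain_append.2 ⟨hch, List.isChain_singleton c, ?_⟩
        rw [hl]
        simpa using hbc

/-- With `f` the indicator of a set `S`, this counts the arcs of `M` leaving `S` minus those
entering it; so `∀ f, netFlow M f = c * (f u - f v)` says that `M` is a flow of value `c` from `u`
to `v`. -/
def netFlow (M : Finset (V × V)) (f : V → ℤ) : ℤ :=
  ∑ e ∈ M, (f e.1 - f e.2)

theorem netFlow_toFinset_pathArcs [DecidableEq V] (hp : IsDipath A p u v) (f : V → ℤ) :
    netFlow (pathArcs p).toFinset f = f u - f v := by
  rw [netFlow, List.sum_toFinset _ (nodup_pathArcs hp.2.2.1)]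
  exact sum_map_pathArcs_sub f hp.1 hp.2.1

theorem netFlow_image_swap [DecidableEq V] (M : Finset (V × V)) (f : V → ℤ) :
    netFlow (M.image Prod.swap) f = -netFlow M f := by
  rw [netFlow, netFlow, sum_image (Prod.swap_injective.injOn), ← sum_neg_distrib]
  simp

theorem netFlow_sdiff [DecidableEq V] (M N : Finset (V × V)) (f : V → ℤ) :
    netFlow (M \ N) f = netFlow M f - netFlow (M ∩ N) f := by
  rw [netFlow, ← sdiff_inter_self_left, sum_sdiff_eq_sub inter_subset_left]
  rfl

theorem netFlow_indicator_nonpos {M : Finset (V × V)} {S : Set V}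
    (hS : ∀ e ∈ M, e.1 ∈ S → e.2 ∈ S) : netFlow M (S.indicator 1) ≤ 0 := by
  refine sum_nonpos fun e he => ?_
  by_cases h1 : e.1 ∈ S
  · simp [h1, hS e he h1]
  · by_cases h2 : e.2 ∈ S <;> simp [h1, h2]

theorem netFlow_indicator_eq_card {M : Finset (V × V)} {S : Set V} [DecidablePred (· ∈ S)]
    (hS : ∀ e ∈ M, e.2 ∈ S → e.1 ∈ S) :
    netFlow M (S.indicator 1) = #{e ∈ M | e.1 ∈ S ∧ e.2 ∉ S} := by
  rw [netFlow, card_filter, Nat.cast_sum]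
  refine sum_congr rfl fun e he => ?_
  by_cases h2 : e.2 ∈ S
  · simp [h2, hS e he h2]
  · by_cases h1 : e.1 ∈ S <;> simp [h1, h2]

theorem reflTransGen_of_netFlow {M : Finset (V × V)} {c : ℤ} (hc : 0 < c)
    (hM : ∀ f, netFlow M f = c * (f u - f v)) :
    Relation.ReflTransGen (fun a b => (a, b) ∈ M) u v := by
  by_contra hv
  set T := {x | Relation.ReflTransGen (fun a b => (a, b) ∈ M) u x}
  have hle := netFlow_indicator_nonpos (S := T) fun e he h1 => h1.tail he
  rw [hM, Set.indicator_of_mem (show u ∈ T from .refl),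
    Set.indicator_of_notMem (show v ∉ T from hv)] at hle
  simp only [Pi.one_apply, sub_zero, mul_one] at hle
  omega

theorem twoReaches_of_netFlow {M : Finset (V × V)} (hA : ∀ e ∈ M, A e.1 e.2)
    (hM : ∀ f, netFlow M f = 2 * (f u - f v)) : TwoReaches A u v := by
  classical
  obtain ⟨W₁, hW₁⟩ := exists_isDipath_of_reflTransGen (reflTransGen_of_netFlow two_pos hM)
  set N := M \ (pathArcs W₁).toFinset
  have hW₁M : (pathArcs W₁).toFinset ⊆ M := fun e he =>
    rel_of_mem_pathArcs hW₁.2.2.2 (List.mem_toFinset.1 he)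
  have hN : ∀ f, netFlow N f = 1 * (f u - f v) := fun f => by
    rw [netFlow, sum_sdiff_eq_sub hW₁M, ← netFlow, ← netFlow, hM,
      netFlow_toFinset_pathArcs hW₁]
    ring
  obtain ⟨W₂, hW₂⟩ := exists_isDipath_of_reflTransGen (reflTransGen_of_netFlow one_pos hN)
  have hW₂N : ∀ e ∈ pathArcs W₂, e ∈ N := fun e he => rel_of_mem_pathArcs hW₂.2.2.2 he
  refine ⟨W₁, W₂, hW₁.mono_s9 fun a b h => hA (a, b) h,
    hW₂.mono_s9 fun a b h => hA (a, b) (sdiff_subset h), fun e h₁ h₂ => ?_⟩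
  exact (mem_sdiff.1 (hW₂N e h₂)).2 (List.mem_toFinset.2 h₁)

def residualRel (A : V → V → Prop) (L : List (V × V)) (a b : V) : Prop :=
  (A a b ∧ (a, b) ∉ L) ∨ (b, a) ∈ L

/-- The arcs of `P` and `Q` that are not cancelled by a reversed copy in the other path form a
flow of value two. -/
theorem twoReaches_of_residual {P Q : List V} (hP : IsDipath A P u v)
    (hQ : IsDipath (residualRel A (pathArcs P)) Q u v) : TwoReaches A u v := by
  classical
  set LP := (pathArcs P).toFinset
  set LQ := (pathArcs Q).toFinset
  have hQres : ∀ e ∈ LQ, residualRel A (pathArcs P) e.1 e.2 := fun e he =>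
    rel_of_mem_pathArcs hQ.2.2.2 (List.mem_toFinset.1 he)
  have hQA : ∀ e ∈ LQ \ LP.image Prod.swap, A e.1 e.2 ∧ e ∉ LP := fun e he => by
    obtain ⟨heQ, heP⟩ := mem_sdiff.1 he
    rcases hQres e heQ with h | h
    · simpa [LP] using h
    · exact absurd (mem_image.2 ⟨_, List.mem_toFinset.2 h, rfl⟩) heP
  have hdisj : Disjoint (LP \ LQ.image Prod.swap) (LQ \ LP.image Prod.swap) :=
    disjoint_left.2 fun e h₁ h₂ => (hQA e h₂).2 (mem_sdiff.1 h₁).1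
  have hcancel : LP ∩ LQ.image Prod.swap = (LQ ∩ LP.image Prod.swap).image Prod.swap := by
    ext e
    simp only [mem_inter, mem_image]
    constructor
    · rintro ⟨h, e', he', rfl⟩
      exact ⟨e', ⟨he', e'.swap, h, Prod.swap_swap _⟩, rfl⟩
    · rintro ⟨_, ⟨he', e'', he'', rfl⟩, rfl⟩
      exact ⟨(Prod.swap_swap e'').symm ▸ he'', _, he', rfl⟩
  refine twoReaches_of_netFlow (M := (LP \ LQ.image Prod.swap) ∪ (LQ \ LP.image Prod.swap))
    (fun e he => ?_) (fun f => ?_)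
  · rcases mem_union.1 he with he | he
    · exact rel_of_mem_pathArcs hP.2.2.2 (List.mem_toFinset.1 (mem_sdiff.1 he).1)
    · exact (hQA e he).1
  · rw [netFlow, sum_union hdisj, ← netFlow, ← netFlow, netFlow_sdiff, netFlow_sdiff, hcancel,
      netFlow_image_swap, netFlow_toFinset_pathArcs hP, netFlow_toFinset_pathArcs hQ]
    ring

def cutArcs (A : V → V → Prop) (S : Set V) : Set (V × V) :=
  {e | A e.1 e.2 ∧ e.1 ∈ S ∧ e.2 ∉ S}

theorem reflTransGen_residual {P : List V} (hP : IsDipath A P u v)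
    (hcut : ∀ S : Set V, u ∈ S → v ∉ S → 1 < (cutArcs A S).encard) :
    Relation.ReflTransGen (residualRel A (pathArcs P)) u v := by
  classical
  by_contra hv
  set S := {x | Relation.ReflTransGen (residualRel A (pathArcs P)) u x}
  have hstep : ∀ a ∈ S, ∀ b, residualRel A (pathArcs P) a b → b ∈ S := fun a ha b h =>
    Relation.ReflTransGen.tail ha h
  -- `P` is the only way out of `S` and never comes back in, so it leaves `S` exactly once.
  have hcutP : ∀ e ∈ cutArcs A S, e ∈ pathArcs P := fun e ⟨hA, h₁, h₂⟩ => by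
    by_contra he
    exact h₂ (hstep _ h₁ _ (Or.inl ⟨hA, he⟩))
  have hin : ∀ e ∈ (pathArcs P).toFinset, e.2 ∈ S → e.1 ∈ S := fun e he h₂ =>
    hstep _ h₂ _ (Or.inr (List.mem_toFinset.1 he))
  have hone := netFlow_indicator_eq_card hin
  rw [netFlow_toFinset_pathArcs hP, Set.indicator_of_mem (show u ∈ S from .refl),
    Set.indicator_of_notMem (show v ∉ S from hv)] at hone
  obtain ⟨e₁, e₂, he₁, he₂, hne⟩ := Set.one_lt_encard_iff.1 (hcut S .refl hv)
  have htwo : 1 < #{e ∈ (pathArcs P).toFinset | e.1 ∈ S ∧ e.2 ∉ S} :=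
    one_lt_card.2 ⟨e₁, by simpa using ⟨hcutP e₁ he₁, he₁.2⟩,
      e₂, by simpa using ⟨hcutP e₂ he₂, he₂.2⟩, hne⟩
  simp only [Pi.one_apply, sub_zero] at hone
  omega

/-- Menger's theorem for two arc-disjoint paths. -/
theorem twoReaches_of_one_lt_encard_cutArcs
    (hcut : ∀ S : Set V, u ∈ S → v ∉ S → 1 < (cutArcs A S).encard) :
    TwoReaches A u v := by
  have hreach : Relation.ReflTransGen A u v := by
    by_contra hv
    obtain ⟨e, hA, h₁, h₂⟩ := Set.encard_pos.1 ((zero_le_one.trans_lt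
      (hcut {x | Relation.ReflTransGen A u x} Relation.ReflTransGen.refl hv)))
    exact h₂ (Relation.ReflTransGen.tail h₁ hA)
  obtain ⟨P, hP⟩ := exists_isDipath_of_reflTransGen hreach
  obtain ⟨Q, hQ⟩ := exists_isDipath_of_reflTransGen (reflTransGen_residual hP hcut)
  exact twoReaches_of_residual hP hQ

theorem exists_mem_pathArcs_cutArcs {S : Set V} (hp : IsDipath A p u v) (hu : u ∈ S)
    (hv : v ∉ S) : ∃ e ∈ pathArcs p, e ∈ cutArcs A S := by
  classical
  have hflow := netFlow_toFinset_pathArcs hp (S.indicator 1)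
  rw [Set.indicator_of_mem hu, Set.indicator_of_notMem hv, netFlow] at hflow
  have hlt : ∑ _e ∈ (pathArcs p).toFinset, (0 : ℤ) < ∑ e ∈ (pathArcs p).toFinset,
      (S.indicator 1 e.1 - S.indicator 1 e.2) := by
    rw [hflow, sum_const_zero]
    exact one_pos
  obtain ⟨e, he, hpos⟩ := exists_lt_of_sum_lt hlt
  have he' := List.mem_toFinset.1 he
  refine ⟨e, he', rel_of_mem_pathArcs hp.2.2.2 he', ?_, ?_⟩ <;>
  · by_contra h
    by_cases h' : e.1 ∈ S <;> by_cases h'' : e.2 ∈ S <;> simp_all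

theorem one_lt_encard_cutArcs_of_disjoint {S : Set V} {q : List V} {a b c d : V}
    (hp : IsDipath A p a b) (hq : IsDipath A q c d) (hpq : ∀ e ∈ pathArcs p, e ∉ pathArcs q)
    (ha : a ∈ S) (hb : b ∉ S) (hc : c ∈ S) (hd : d ∉ S) : 1 < (cutArcs A S).encard := by
  obtain ⟨e₁, he₁p, he₁⟩ := exists_mem_pathArcs_cutArcs hp ha hb
  obtain ⟨e₂, he₂q, he₂⟩ := exists_mem_pathArcs_cutArcs hq hc hd
  exact Set.one_lt_encard_iff.2 ⟨e₁, e₂, he₁, he₂, fun he => hpq _ he₁p (he ▸ he₂q)⟩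

theorem TwoReaches.one_lt_encard_cutArcs {S : Set V} (h : TwoReaches A u v) (hu : u ∈ S)
    (hv : v ∉ S) : 1 < (cutArcs A S).encard :=
  let ⟨_, _, hp, hq, hpq⟩ := h
  one_lt_encard_cutArcs_of_disjoint hp hq hpq hu hv hu hv

end TwoReach

theorem stmt_9_general {V : Type*} (A : V → V → Prop) (u s t v : V)
    (hs : TwoReaches A s v) (ht : TwoReaches A t v)
    (h : ∃ p q : List V, IsDipath A p u s ∧ IsDipath A q u t ∧
      ∀ a ∈ pathArcs p, a ∉ pathArcs q) :
    TwoReaches A u v := by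
  obtain ⟨p, q, hp, hq, hpq⟩ := h
  refine twoReaches_of_one_lt_encard_cutArcs fun S hu hv => ?_
  by_cases hsS : s ∈ S
  · exact hs.one_lt_encard_cutArcs hsS hv
  by_cases htS : t ∈ S
  · exact ht.one_lt_encard_cutArcs htS hv
  exact one_lt_encard_cutArcs_of_disjoint hp hq hpq hu hsS hu htS

/-- If `s` and `t` each two-reach `v`, and there are arc-disjoint directed paths from
`u` to `s` and from `u` to `t`, then `u` two-reaches `v`. -/
theorem stmt_9 {V : Type*} [Fintype V] (A : V → V → Prop) (u s t v : V)
    (hs : TwoReaches A s v) (ht : TwoReaches A t v)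
    (h : ∃ p q : List V, IsDipath A p u s ∧ IsDipath A q u t ∧
      ∀ a ∈ pathArcs p, a ∉ pathArcs q) :
    TwoReaches A u v :=
  stmt_9_general A u s t v hs ht h
end
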